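/- Let J be a factor reflexive closed subspace of a Banach space X (i.e., X/J is reflexive). If (X,J) has the CQLP, then (X**, J^⊥⊥) has the CQLP. -/

import Mathlib

open NormedSpace

/-- (X,J) has the compact quotient lifting property (CQLP). -/
def HasCQLP (X : Type*) [NormedAddCommGroup X] [NormedSpace ℝ X] (J : Submodule ℝ X) : Prop :=
  ∀ (Z : Type) [NormedAddCommGroup Z] [NormedSpace ℝ Z] [CompleteSpace Z]
    (T : Z →L[ℝ] X ⧸ J), IsCompactOperator T → ∃ S : Z →L[ℝ] X, IsCompactOperator S ∧
      (∀ z : Z, (Submodule.Quotient.mk (S z) : X ⧸ J) = T z) ∧ ‖S‖ = ‖T‖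

/-- The double annihilator J^⊥⊥ of a subspace J, as a subspace of the bidual X**. -/
noncomputable def doubleAnn (X : Type*) [NormedAddCommGroup X] [NormedSpace ℝ X] (J : Submodule ℝ X) :
    Submodule ℝ (StrongDual ℝ (StrongDual ℝ X)) where
  carrier := {Ψ | ∀ φ : StrongDual ℝ X, (∀ x ∈ J, φ x = 0) → Ψ φ = 0}
  add_mem' := by intro f g hf hg φ hφ; simp [hf φ hφ, hg φ hφ]
  zero_mem' := by intro φ hφ; simp
  smul_mem' := by intro c f hf φ hφ; simp [hf φ hφ]

/-!
The bitranspose of the quotient map `π : X → X ⧸ J`, followed by the inverse of the canonical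
embedding of the reflexive space `X ⧸ J` into its bidual, is a map `P : X** → X ⧸ J` that extends
`π` along `X ⊂ X**` and has kernel `J^⊥⊥`. It induces an isometry `X** ⧸ J^⊥⊥ → X ⧸ J`: `P` is
norm-decreasing, and conversely Hahn–Banach extends `Ψ` restricted to `J^⊥ ≅ (X ⧸ J)*` to some
`Φ ≡ Ψ mod J^⊥⊥` with `‖Φ‖ ≤ ‖P Ψ‖`. A compact operator into `X** ⧸ J^⊥⊥` thus becomes a compact
operator into `X ⧸ J` of the same norm; lift it by the CQLP of `(X, J)` and embed `X` in `X**`.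
-/

namespace Submodule

section Normed

variable {𝕜 M N : Type*} [NontriviallyNormedField 𝕜] [SeminormedAddCommGroup M]
  [NormedSpace 𝕜 M] [SeminormedAddCommGroup N] [NormedSpace 𝕜 N] (S : Submodule 𝕜 M)

theorem norm_mkQL_le : ‖S.mkQL‖ ≤ 1 :=
  ContinuousLinearMap.opNorm_le_bound _ zero_le_one fun x => by
    simpa using Quotient.norm_mk_le S x

theorem norm_liftQL_le (f : M →L[𝕜] N) (h : S ≤ f.ker) : ‖S.liftQL f h‖ ≤ ‖f‖ := by
  refine ContinuousLinearMap.opNorm_le_bound _ (norm_nonneg f) fun x => ?_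
  rcases (norm_nonneg f).eq_or_lt' with hf | hf
  · obtain ⟨m, rfl⟩ := S.mkQ_surjective x
    simpa [hf] using f.le_opNorm m
  rw [← div_le_iff₀' hf]
  refine QuotientAddGroup.le_norm_iff.2 fun m hm => ?_
  rw [div_le_iff₀' hf, ← hm]
  exact f.le_opNorm m

end Normed

section Isometry

variable {R Y F : Type*} [Ring R] [SeminormedAddCommGroup Y] [Module R Y]
  [SeminormedAddCommGroup F] [Module R F] (K : Submodule R Y)

noncomputable def liftQIsometry (f : Y →ₗ[R] F) (hker : LinearMap.ker f = K)
    (hle : ∀ y, ‖f y‖ ≤ ‖y‖) (hlift : ∀ y, ∃ y', y - y' ∈ K ∧ ‖y'‖ ≤ ‖f y‖) :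
    (Y ⧸ K) →ₗᵢ[R] F where
  toLinearMap := K.liftQ f hker.ge
  norm_map' ξ := by
    refine le_antisymm (QuotientAddGroup.le_norm_iff.2 fun y hy => hy ▸ hle y) ?_
    obtain ⟨y, rfl⟩ := K.mkQ_surjective ξ
    obtain ⟨y', hyy', hy'⟩ := hlift y
    calc ‖K.mkQ y‖ = ‖K.mkQ y'‖ := by rw [mkQ_apply, mkQ_apply, (Quotient.eq K).2 hyy']
      _ ≤ ‖y'‖ := Quotient.norm_mk_le K y'
      _ ≤ ‖f y‖ := hy'

theorem liftQIsometry_injective (f : Y →ₗ[R] F) (hker : LinearMap.ker f = K)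
    (hle : ∀ y, ‖f y‖ ≤ ‖y‖) (hlift : ∀ y, ∃ y', y - y' ∈ K ∧ ‖y'‖ ≤ ‖f y‖) :
    Function.Injective (K.liftQIsometry f hker hle hlift) :=
  LinearMap.ker_eq_bot.1 (K.ker_liftQ_eq_bot _ _ hker.le)

end Isometry

end Submodule

theorem HasCQLP.of_linearIsometry {X Y : Type*} [NormedAddCommGroup X] [NormedSpace ℝ X]
    [NormedAddCommGroup Y] [NormedSpace ℝ Y] {J : Submodule ℝ X} {K : Submodule ℝ Y}
    (h : HasCQLP X J) (ι : X →ₗᵢ[ℝ] Y) (e : (Y ⧸ K) →ₗᵢ[ℝ] X ⧸ J) (he : Function.Injective e)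
    (hιe : ∀ x, e (K.mkQ (ι x)) = J.mkQ x) : HasCQLP Y K := by
  intro Z _ _ _ T hT
  obtain ⟨S, hSc, hSlift, hSn⟩ := h Z (e.toContinuousLinearMap.comp T) (hT.clm_comp _)
  refine ⟨ι.toContinuousLinearMap.comp S, hSc.clm_comp _, fun z => he ?_, ?_⟩
  · exact (hιe (S z)).trans (hSlift z)
  · rw [ι.norm_toContinuousLinearMap_comp, hSn, e.norm_toContinuousLinearMap_comp]

section QuotientBidual

variable {X : Type*} [NormedAddCommGroup X] [NormedSpace ℝ X]

/-- `P : X** → X ⧸ J` is the bitranspose of the quotient map `π : X → X ⧸ J`, read through the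
identification of the reflexive space `X ⧸ J` with its bidual. -/
def IsQuotientBidualMap (J : Submodule ℝ X) (P : StrongDual ℝ (StrongDual ℝ X) →ₗ[ℝ] X ⧸ J) :
    Prop :=
  ∀ (Ψ : StrongDual ℝ (StrongDual ℝ X)) (ψ : StrongDual ℝ (X ⧸ J)), ψ (P Ψ) = Ψ (ψ.comp J.mkQL)

theorem exists_isQuotientBidualMap {J : Submodule ℝ X} [IsClosed (J : Set X)]
    (hrefl : Function.Surjective (inclusionInDoubleDual ℝ (X ⧸ J))) :
    ∃ P, IsQuotientBidualMap J P := by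
  let e := LinearIsometryEquiv.ofSurjective (inclusionInDoubleDualLi ℝ) hrefl
  let π' : StrongDual ℝ (X ⧸ J) →L[ℝ] StrongDual ℝ X := ContinuousLinearMap.precomp ℝ J.mkQL
  let Q : StrongDual ℝ (StrongDual ℝ X) →L[ℝ] StrongDual ℝ (StrongDual ℝ (X ⧸ J)) :=
    ContinuousLinearMap.precomp ℝ π'
  exact ⟨e.symm.toLinearMap ∘ₗ Q.toLinearMap, fun Ψ ψ => congr($(e.apply_symm_apply (Q Ψ)) ψ)⟩

namespace IsQuotientBidualMap

variable {J : Submodule ℝ X} {P : StrongDual ℝ (StrongDual ℝ X) →ₗ[ℝ] X ⧸ J}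

theorem apply_eq_liftQL_apply (hP : IsQuotientBidualMap J P) (Ψ : StrongDual ℝ (StrongDual ℝ X))
    (φ : StrongDual ℝ X) (hφ : J ≤ φ.ker) : Ψ φ = J.liftQL φ hφ (P Ψ) :=
  (hP Ψ (J.liftQL φ hφ)).symm

theorem ker_eq [IsClosed (J : Set X)] (hP : IsQuotientBidualMap J P) :
    LinearMap.ker P = doubleAnn X J := by
  ext Ψ
  refine ⟨fun h φ hφ => ?_, fun h => ?_⟩
  · rw [hP.apply_eq_liftQL_apply Ψ φ hφ, LinearMap.mem_ker.1 h, map_zero]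
  · refine (SeparatingDual.eq_zero_iff_forall_dual_eq_zero (R := ℝ) _).2 fun ψ => ?_
    rw [hP]
    exact h _ fun x hx => by simp [(Submodule.Quotient.mk_eq_zero J).2 hx]

theorem apply_inclusionInDoubleDual [IsClosed (J : Set X)] (hP : IsQuotientBidualMap J P)
    (x : X) : P (inclusionInDoubleDual ℝ X x) = J.mkQ x :=
  (SeparatingDual.eq_iff_forall_dual_eq (R := ℝ)).2 fun ψ => hP _ ψ

theorem norm_apply_le (hP : IsQuotientBidualMap J P) (Ψ : StrongDual ℝ (StrongDual ℝ X)) :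
    ‖P Ψ‖ ≤ ‖Ψ‖ :=
  NormedSpace.norm_le_dual_bound ℝ _ (norm_nonneg Ψ) fun ψ => by
    rw [hP]
    calc ‖Ψ (ψ.comp J.mkQL)‖ ≤ ‖Ψ‖ * ‖ψ.comp J.mkQL‖ := Ψ.le_opNorm _
      _ ≤ ‖Ψ‖ * ‖ψ‖ := by
        gcongr
        calc ‖ψ.comp J.mkQL‖ ≤ ‖ψ‖ * ‖J.mkQL‖ := ψ.opNorm_comp_le _
          _ ≤ ‖ψ‖ := mul_le_of_le_one_right (norm_nonneg ψ) J.norm_mkQL_le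

theorem exists_sub_mem_doubleAnn_norm_le (hP : IsQuotientBidualMap J P)
    (Ψ : StrongDual ℝ (StrongDual ℝ X)) :
    ∃ Φ : StrongDual ℝ (StrongDual ℝ X), Ψ - Φ ∈ doubleAnn X J ∧ ‖Φ‖ ≤ ‖P Ψ‖ := by
  let Jperp := StrongDual.polarSubmodule ℝ J
  obtain ⟨Φ, hΦ, hΦn⟩ := exists_extension_norm_eq Jperp (Ψ.comp Jperp.subtypeL)
  refine ⟨Φ, fun φ hφ => ?_, hΦn.trans_le ?_⟩
  · have : Φ φ = Ψ φ := hΦ ⟨φ, (StrongDual.mem_polarSubmodule ℝ J φ).2 hφ⟩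
    simp [this]
  refine ContinuousLinearMap.opNorm_le_bound _ (norm_nonneg _) fun ⟨φ, hφ⟩ => ?_
  have hφJ : J ≤ φ.ker := fun x hx => (StrongDual.mem_polarSubmodule ℝ J φ).1 hφ x hx
  show ‖Ψ φ‖ ≤ ‖P Ψ‖ * ‖φ‖
  calc ‖Ψ φ‖ = ‖J.liftQL φ hφJ (P Ψ)‖ := by rw [hP.apply_eq_liftQL_apply Ψ φ hφJ]
    _ ≤ ‖J.liftQL φ hφJ‖ * ‖P Ψ‖ := ContinuousLinearMap.le_opNorm _ _
    _ ≤ ‖φ‖ * ‖P Ψ‖ := by gcongr; exact J.norm_liftQL_le _ _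
    _ = ‖P Ψ‖ * ‖φ‖ := mul_comm _ _

end IsQuotientBidualMap

end QuotientBidual

theorem stmt_9_general (X : Type*) [NormedAddCommGroup X] [NormedSpace ℝ X]
    (J : Submodule ℝ X) (hJ : IsClosed (J : Set X))
    (hrefl : Function.Surjective (inclusionInDoubleDual ℝ (X ⧸ J)))
    (h : HasCQLP X J) : HasCQLP (StrongDual ℝ (StrongDual ℝ X)) (doubleAnn X J) := by
  obtain ⟨P, hP⟩ := exists_isQuotientBidualMap hrefl
  let e := Submodule.liftQIsometry (R := ℝ) (doubleAnn X J) P hP.ker_eq hP.norm_apply_le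
    fun Ψ => hP.exists_sub_mem_doubleAnn_norm_le Ψ
  exact h.of_linearIsometry (inclusionInDoubleDualLi ℝ) e
    (Submodule.liftQIsometry_injective _ _ _ _ _) hP.apply_inclusionInDoubleDual

/-- If J is a factor reflexive closed subspace of X (i.e. X/J is reflexive)
and (X,J) has the CQLP, then (X**, J^⊥⊥) has the CQLP. -/
theorem stmt_9 (X : Type*) [NormedAddCommGroup X] [NormedSpace ℝ X] [CompleteSpace X]
    (J : Submodule ℝ X) (hJ : IsClosed (J : Set X))
    (hrefl : Function.Surjective (inclusionInDoubleDual ℝ (X ⧸ J)))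
    (h : HasCQLP X J) : HasCQLP (StrongDual ℝ (StrongDual ℝ X)) (doubleAnn X J) :=
  stmt_9_general X J hJ hrefl h
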